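/- Let A be an n×n real matrix and let n⃗ ∈ ℝⁿ be a unit vector. The function ξ_Γ(t) := det(1 + t·A) · ‖((1 + t·A)⁻¹)ᵀ n⃗‖, defined for |t| small enough that 1 + t·A is invertible, is differentiable at t = 0 with derivative ξ_Γ′(0) = trace(A) − ⟨n⃗, A n⃗⟩. In particular, for A = DV(x) and n⃗ the outward unit normal, ξ_Γ′(0) equals the tangential divergence div_Γ V := div V − n⃗ᵀ (DV) n⃗. -/

import Mathlib

/-!
Differentiate the two factors at `t = 0` separately. The determinant is the polynomial
`det (1 + X • A)` evaluated at `t`, whose linear coefficient is `trace A`. The inverse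
`(1 + t • A)⁻¹` has derivative `-A` there, so `w t := ((1 + t • A)⁻¹)ᵀ n⃗` has `w 0 = n⃗` and
`w' 0 = -Aᵀ n⃗`; since `‖n⃗‖ = 1`, the derivative of `‖w t‖` at `0` is
`⟪n⃗, -Aᵀ n⃗⟫ = -⟪n⃗, A n⃗⟫`. The product rule combines the two.
-/

open Matrix

/-- Multiplication of a matrix with a vector of `EuclideanSpace ℝ (Fin n)`. -/
noncomputable def mulVecE {n : ℕ} (A : Matrix (Fin n) (Fin n) ℝ)
    (v : EuclideanSpace ℝ (Fin n)) : EuclideanSpace ℝ (Fin n) :=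
  WithLp.toLp 2 (A.mulVec v)

open Polynomial in
theorem Matrix.hasDerivAt_det_one_add_smul {𝕜 m : Type*} [NontriviallyNormedField 𝕜]
    [Fintype m] [DecidableEq m] (A : Matrix m m 𝕜) :
    HasDerivAt (fun t : 𝕜 => (1 + t • A).det) A.trace 0 := by
  have h := (det (1 + (X : 𝕜[X]) • A.map C)).hasDerivAt 0
  rw [derivative_det_one_add_X_smul] at h
  convert h using 2 with t
  simp [eval_det, ← smul_eq_mul_diagonal]

theorem hasDerivAt_ringInverse_one_add_smul {𝕜 R : Type*} [NontriviallyNormedField 𝕜]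
    [NormedRing R] [NormedAlgebra 𝕜 R] [CompleteSpace R] (a : R) :
    HasDerivAt (fun t : 𝕜 => Ring.inverse (1 + t • a)) (-a) 0 := by
  have hline : HasDerivAt (fun t : 𝕜 => 1 + t • a) a 0 := by
    simpa using ((hasDerivAt_id (0 : 𝕜)).smul_const a).const_add 1
  have hinv : HasFDerivAt Ring.inverse (-ContinuousLinearMap.mulLeftRight 𝕜 R 1 1)
      (1 + (0 : 𝕜) • a) := by
    simpa using hasFDerivAt_ringInverse (𝕜 := 𝕜) (1 : Rˣ)
  simpa [Function.comp_def] using hinv.comp_hasDerivAt 0 hline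

open scoped InnerProductSpace

theorem HasDerivAt.norm {F : Type*} [NormedAddCommGroup F] [InnerProductSpace ℝ F]
    {f : ℝ → F} {f' : F} {x : ℝ} (hf : HasDerivAt f f' x) (h0 : f x ≠ 0) :
    HasDerivAt (‖f ·‖) (⟪f x, f'⟫_ℝ / ‖f x‖) x := by
  have h := hf.norm_sq.sqrt (by positivity)
  simp only [Real.sqrt_sq (norm_nonneg _)] at h
  convert h using 1
  field_simp

@[simp]
theorem mulVecE_one {n : ℕ} (v : EuclideanSpace ℝ (Fin n)) : mulVecE 1 v = v := by
  simp [mulVecE]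

theorem inner_mulVecE_transpose {n : ℕ} (A : Matrix (Fin n) (Fin n) ℝ)
    (u w : EuclideanSpace ℝ (Fin n)) : ⟪u, mulVecE Aᵀ w⟫_ℝ = ⟪mulVecE A u, w⟫_ℝ := by
  simp only [mulVecE, EuclideanSpace.inner_eq_star_dotProduct, star_trivial]
  rw [mulVec_transpose, dotProduct_mulVec, dotProduct_comm]

section MatrixCalculus

-- Any norm would do (they all induce the product topology); the statements leaving this
-- section do not mention it.
attribute [local instance] Matrix.linftyOpNormedRing Matrix.linftyOpNormedAlgebra

theorem Matrix.hasDerivAt_inv_one_add_smul {𝕜 m : Type*} [NontriviallyNormedField 𝕜]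
    [CompleteSpace 𝕜] [Fintype m] [DecidableEq m] (A : Matrix m m 𝕜) :
    HasDerivAt (fun t : 𝕜 => (1 + t • A)⁻¹) (-A) 0 := by
  simp only [nonsing_inv_eq_ringInverse]
  -- Instance search only knows completeness for the product uniformity, not for the
  -- operator-norm one.
  exact @hasDerivAt_ringInverse_one_add_smul 𝕜 (Matrix m m 𝕜) _ _ _
    (FiniteDimensional.complete 𝕜 _) A

theorem HasDerivAt.mulVecE_transpose {n : ℕ} {M : ℝ → Matrix (Fin n) (Fin n) ℝ}
    {M' : Matrix (Fin n) (Fin n) ℝ} {t : ℝ} (hM : HasDerivAt M M' t)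
    (v : EuclideanSpace ℝ (Fin n)) :
    HasDerivAt (fun s => mulVecE (M s)ᵀ v) (mulVecE M'ᵀ v) t := by
  let φ : Matrix (Fin n) (Fin n) ℝ →ₗ[ℝ] EuclideanSpace ℝ (Fin n) :=
    { toFun := fun N => mulVecE Nᵀ v
      map_add' := fun N N' => by simp [mulVecE, add_mulVec]
      map_smul' := fun c N => by simp [mulVecE, smul_mulVec] }
  exact φ.toContinuousLinearMap.hasFDerivAt.comp_hasDerivAt t hM

theorem hasDerivAt_mulVecE_inv_one_add_smul_transpose {n : ℕ} (A : Matrix (Fin n) (Fin n) ℝ)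
    (v : EuclideanSpace ℝ (Fin n)) :
    HasDerivAt (fun t : ℝ => mulVecE ((1 + t • A)⁻¹)ᵀ v) (-mulVecE Aᵀ v) 0 := by
  simpa [mulVecE, neg_mulVec] using (hasDerivAt_inv_one_add_smul A).mulVecE_transpose v

end MatrixCalculus

/-- For a unit vector `n⃗`, the surface element
`ξ_Γ(t) = det(1 + t•A) · ‖((1 + t•A)⁻¹)ᵀ n⃗‖` is differentiable at `t = 0` with derivative
`trace A - ⟪n⃗, A n⃗⟫`, i.e. the tangential divergence `div_Γ V = div V - n⃗ᵀ(DV)n⃗` when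
`A = DV(x)`. -/
theorem surface_element_hasDerivAt_tangentialDivergence (n : ℕ)
    (A : Matrix (Fin n) (Fin n) ℝ) (v : EuclideanSpace ℝ (Fin n)) (hv : ‖v‖ = 1) :
    HasDerivAt (fun t : ℝ => (1 + t • A).det * ‖mulVecE ((1 + t • A)⁻¹)ᵀ v‖)
      (A.trace - (inner ℝ v (mulVecE A v) : ℝ)) 0 := by
  have hv0 : v ≠ 0 := norm_ne_zero_iff.mp (by simp [hv])
  have hnorm := (hasDerivAt_mulVecE_inv_one_add_smul_transpose A v).norm (by simpa using hv0)
  refine ((hasDerivAt_det_one_add_smul A).mul hnorm).congr_deriv ?_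
  simp [hv, inner_mulVecE_transpose, real_inner_comm, sub_eq_add_neg]
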